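/- Fix integers m ≥ 1, M ≥ 2, γ ≥ 4, and κ ≥ 4, and set w₁ = C(γ,2)C(κ,2), w₂ = 3C(γ,2)C(κ,3) + 3C(γ,3)C(κ,2), w₃ = 18C(γ,3)C(κ,3), and w₄ = 6C(γ,2)C(κ,4) + 6C(γ,4)C(κ,2) + 36C(γ,3)C(κ,4) + 36C(γ,4)C(κ,3) + 72C(γ,4)C(κ,4). Define N₈ : ((Fin (m+1) × Fin M) → ℝ) → ℝ by N₈(p) = Σ_{b ∈ ℤ, M ∣ b} { w₁[f_{p,2}² · f_{p,−2}²]_{(0,b)} + w₂[f_{p,2} · f_{p,−2} · f_p² · f̄_p²]_{(0,b)} + w₃[f_{p,2} · f_p² · f̄_p⁴]_{(0,b)} + w₄[f_p⁴ · f̄_p⁴]_{(0,b)} }. Let p* : Fin (m+1) → ℝ and let S = { q : (Fin (m+1) × Fin M) → ℝ | for every i, Σ_{j=0}^{M−1} q(i,j) = p*(i) }. If p ∈ S is a local minimum of N₈ on S, then there exists c : Fin (m+1) → ℝ such that for all i ∈ {0,…,m} and j ∈ {0,…,M−1} (with j cast to ℤ): Σ_{b ∈ ℤ, M ∣ b}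 { 4w₁[f_{p,2}² · f_{p,−2}]_{(2i, b+2j)} + 2w₂[f_{p,2} · f_p² · f̄_p²]_{(2i, b+2j)} + 4w₂[f_{p,2} · f_{p,−2} · f_p² · f̄_p]_{(i, b+j)} + w₃[f_p² · f̄_p⁴]_{(−2i, b−2j)} + 2w₃[f_{p,2} · f_p · f̄_p⁴]_{(−i, b−j)} + 4w₃[f_{p,2} · f_p² · f̄_p³]_{(i, b+j)} + 8w₄[f_p⁴ · f̄_p³]_{(i, b+j)} } = c(i). (Lemma 2: necessary first-order conditions for a local minimizer of the expected cycle-8 count.) -/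

import Mathlib

/-!
Write `Λ g = Σ_{M ∣ b} [g]_{(0,b)}`, a linear functional on `ℝ[ℤ × ℤ]`. Then
`N₈(q) = Λ (Ψ (f_{q,2}, f_{q,-2}, f_{q,1}, f_{q,-1}))` for a fixed polynomial form `Ψ`, and every
`f_{q,a}` is linear in `q`. If the row sums of `v` vanish, the line `p + t v` stays in `S`, and
`t ↦ N₈(p + t v)` is a real polynomial with linear coefficient `Λ (DΨ(p)(v))`; at a local
minimum this vanishes. With `v = e_{ij} - e_{i0}` the quantity `Λ (DΨ(p)(e_{ij}))` is therefore
independent of `j`. It equals the left-hand side of the theorem: multiplying by the monomial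
`f_{e_{ij},a} = X^{ai} Y^{aj}` shifts coefficients, and `Λ` is invariant under
`X, Y ↦ X⁻¹, Y⁻¹`, which exchanges `f_{p,a}` and `f_{p,-a}` and merges conjugate terms of `DΨ`.
-/

/-- `f_{p,a}`: the Laurent polynomial `Σ_{i,j} p(i,j) X^{a·i} Y^{a·j}` in
`AddMonoidAlgebra ℝ (ℤ × ℤ)`; `fpa p 1 = f_p`, `fpa p (-1) = f̄_p`, and `fpa p 2`,
`fpa p (-2)` correspond to `f(X²,Y²)`, `f(X⁻²,Y⁻²)`. -/
noncomputable def fpa {m M : ℕ} (p : Fin (m + 1) × Fin M → ℝ) (a : ℤ) :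
    AddMonoidAlgebra ℝ (ℤ × ℤ) :=
  ∑ ij : Fin (m + 1) × Fin M,
    AddMonoidAlgebra.single (a * (ij.1 : ℤ), a * (ij.2 : ℤ)) (p ij)

/-- `w₁ = C(γ,2)C(κ,2)`. -/
noncomputable def w1 (γ κ : ℕ) : ℝ := (γ.choose 2 * κ.choose 2 : ℕ)

/-- `w₂ = 3C(γ,2)C(κ,3) + 3C(γ,3)C(κ,2)`. -/
noncomputable def w2 (γ κ : ℕ) : ℝ :=
  (3 * (γ.choose 2 * κ.choose 3) + 3 * (γ.choose 3 * κ.choose 2) : ℕ)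

/-- `w₃ = 18C(γ,3)C(κ,3)`. -/
noncomputable def w3 (γ κ : ℕ) : ℝ := (18 * (γ.choose 3 * κ.choose 3) : ℕ)

/-- `w₄ = 6C(γ,2)C(κ,4) + 6C(γ,4)C(κ,2) + 36C(γ,3)C(κ,4) + 36C(γ,4)C(κ,3) + 72C(γ,4)C(κ,4)`. -/
noncomputable def w4 (γ κ : ℕ) : ℝ :=
  (6 * (γ.choose 2 * κ.choose 4) + 6 * (γ.choose 4 * κ.choose 2) +
    36 * (γ.choose 3 * κ.choose 4) + 36 * (γ.choose 4 * κ.choose 3) +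
    72 * (γ.choose 4 * κ.choose 4) : ℕ)

/-- `N₈(p)`: the expected number of cycle-8 candidates in the MD protograph. -/
noncomputable def N8 (m M γ κ : ℕ) (p : Fin (m + 1) × Fin M → ℝ) : ℝ :=
  ∑ᶠ (b : ℤ) (_ : (M : ℤ) ∣ b),
    (w1 γ κ * ((fpa p 2) ^ 2 * (fpa p (-2)) ^ 2).coeff (0, b) +
     w2 γ κ * ((fpa p 2) * (fpa p (-2)) * (fpa p 1) ^ 2 * (fpa p (-1)) ^ 2).coeff (0, b) +
     w3 γ κ * ((fpa p 2) * (fpa p 1) ^ 2 * (fpa p (-1)) ^ 4).coeff (0, b) +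
     w4 γ κ * ((fpa p 1) ^ 4 * (fpa p (-1)) ^ 4).coeff (0, b))

open Polynomial

theorem Polynomial.hasDerivAt_linearMap_eval_algebraMap {R : Type*} [CommRing R] [Algebra ℝ R]
    (Λ : R →ₗ[ℝ] ℝ) (P : R[X]) :
    HasDerivAt (fun t : ℝ => Λ (P.eval (algebraMap ℝ R t))) (Λ (P.coeff 1)) 0 := by
  set Q : ℝ[X] := ∑ n ∈ P.support, monomial n (Λ (P.coeff n))
  have hQ : (fun t : ℝ => Λ (P.eval (algebraMap ℝ R t))) = fun t => Q.eval t := by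
    ext t
    simp only [Q, eval_finsetSum, eval_monomial]
    rw [eval_eq_sum, Polynomial.sum_def, map_sum]
    refine Finset.sum_congr rfl fun n _ => ?_
    rw [← map_pow, mul_comm, ← Algebra.smul_def, map_smul, smul_eq_mul, mul_comm]
  have hQ1 : Q.coeff 1 = Λ (P.coeff 1) := by
    simp only [Q, finsetSum_coeff, coeff_monomial, Finset.sum_ite_eq']
    split_ifs with h
    · rfl
    · rw [notMem_support_iff.mp h, map_zero]
  rw [hQ, ← hQ1]
  have hD := Q.hasDerivAt 0
  rw [← coeff_zero_eq_eval_zero, coeff_derivative] at hD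
  simpa using hD

theorem IsLocalMinOn.isLocalMin_comp_line {E : Type*} [TopologicalSpace E] [AddCommGroup E]
    [Module ℝ E] [ContinuousAdd E] [ContinuousSMul ℝ E] {f : E → ℝ} {S : Set E} {p v : E}
    (hf : IsLocalMinOn f S p) (hS : ∀ t : ℝ, p + t • v ∈ S) :
    IsLocalMin (fun t : ℝ => f (p + t • v)) 0 := by
  have hf' : IsLocalMinOn f S ((fun t : ℝ => p + t • v) 0) := by simpa using hf
  exact isLocalMinOn_univ_iff.mp <| hf'.comp_continuousOn (g := fun t : ℝ => p + t • v)
    (fun t _ => hS t) (by fun_prop) (Set.mem_univ 0)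

section Cycle8Form

variable {R : Type*} [CommRing R] [Algebra ℝ R] (γ κ : ℕ)

noncomputable def cycle8Form (a b c d : R) : R :=
  w1 γ κ • (a ^ 2 * b ^ 2) + w2 γ κ • (a * b * c ^ 2 * d ^ 2) + w3 γ κ • (a * c ^ 2 * d ^ 4) +
    w4 γ κ • (c ^ 4 * d ^ 4)

noncomputable def cycle8FormDeriv (a b c d a' b' c' d' : R) : R :=
  w1 γ κ • (2 * a * b ^ 2 * a' + 2 * a ^ 2 * b * b') +
  w2 γ κ • (b * c ^ 2 * d ^ 2 * a' + a * c ^ 2 * d ^ 2 * b' + 2 * a * b * c * d ^ 2 * c' +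
    2 * a * b * c ^ 2 * d * d') +
  w3 γ κ • (c ^ 2 * d ^ 4 * a' + 2 * a * c * d ^ 4 * c' + 4 * a * c ^ 2 * d ^ 3 * d') +
  w4 γ κ • (4 * c ^ 3 * d ^ 4 * c' + 4 * c ^ 4 * d ^ 3 * d')

theorem cycle8FormDeriv_sub (a b c d a₁ b₁ c₁ d₁ a₂ b₂ c₂ d₂ : R) :
    cycle8FormDeriv γ κ a b c d (a₁ - a₂) (b₁ - b₂) (c₁ - c₂) (d₁ - d₂) =
      cycle8FormDeriv γ κ a b c d a₁ b₁ c₁ d₁ - cycle8FormDeriv γ κ a b c d a₂ b₂ c₂ d₂ := by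
  simp only [cycle8FormDeriv, Algebra.smul_def]
  ring

theorem eval_cycle8Form_line (a b c d a' b' c' d' : R) (t : ℝ) :
    (cycle8Form γ κ (C a + X * C a') (C b + X * C b') (C c + X * C c') (C d + X * C d')).eval
        (algebraMap ℝ R t) =
      cycle8Form γ κ (a + t • a') (b + t • b') (c + t • c') (d + t • d') := by
  simp only [cycle8Form, eval_add, eval_smul, eval_mul, eval_pow, eval_C, eval_X]
  simp only [Algebra.smul_def]

theorem coeff_one_cycle8Form_line (a b c d a' b' c' d' : R) :
    (cycle8Form γ κ (C a + X * C a') (C b + X * C b') (C c + X * C c') (C d + X * C d')).coeff 1 =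
      cycle8FormDeriv γ κ a b c d a' b' c' d' := by
  have coeff_one_eq (P : R[X]) : P.coeff 1 = (derivative P).eval 0 := by
    simp [← coeff_zero_eq_eval_zero, coeff_derivative]
  simp only [coeff_one_eq, cycle8Form, cycle8FormDeriv, derivative_add, derivative_smul,
    derivative_mul, derivative_pow, derivative_C, derivative_X, eval_add, eval_smul, eval_mul,
    eval_pow, eval_C, eval_X, eval_zero, eval_one]
  simp only [Algebra.smul_def]
  ring

theorem hasDerivAt_cycle8Form_line (Λ : R →ₗ[ℝ] ℝ) (a b c d a' b' c' d' : R) :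
    HasDerivAt (fun t : ℝ => Λ (cycle8Form γ κ (a + t • a') (b + t • b') (c + t • c') (d + t • d')))
      (Λ (cycle8FormDeriv γ κ a b c d a' b' c' d')) 0 := by
  have h := (cycle8Form γ κ (C a + X * C a') (C b + X * C b') (C c + X * C c')
      (C d + X * C d')).hasDerivAt_linearMap_eval_algebraMap Λ
  rw [coeff_one_cycle8Form_line] at h
  simpa only [eval_cycle8Form_line] using h

theorem map_cycle8FormDeriv_of_involution (σ : R →ₐ[ℝ] R) (Λ : R →ₗ[ℝ] ℝ)
    (hΛ : ∀ x, Λ (σ x) = Λ x) {a b c d a' b' c' d' : R} (ha : σ a = b) (hb : σ b = a)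
    (hc : σ c = d) (hd : σ d = c) (ha' : σ a' = b') (hc' : σ c' = d') :
    Λ (cycle8FormDeriv γ κ a b c d a' b' c' d') =
      Λ ((4 * w1 γ κ) • (a ^ 2 * b * b') + (2 * w2 γ κ) • (a * c ^ 2 * d ^ 2 * b') +
        (4 * w2 γ κ) • (a * b * c ^ 2 * d * d') + w3 γ κ • (c ^ 2 * d ^ 4 * a') +
        (2 * w3 γ κ) • (a * c * d ^ 4 * c') + (4 * w3 γ κ) • (a * c ^ 2 * d ^ 3 * d') +
        (8 * w4 γ κ) • (c ^ 4 * d ^ 3 * d')) := by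
  -- Each term of `V` is `σ`-conjugate to another term of the derivative; since `Λ ∘ σ = Λ`,
  -- trading it for its conjugate does not change the value.
  set V := w1 γ κ • (2 * a * b ^ 2 * a') +
    w2 γ κ • (b * c ^ 2 * d ^ 2 * a' + 2 * a * b * c * d ^ 2 * c') + w4 γ κ • (4 * c ^ 3 * d ^ 4 * c')
  have hσV : σ V = w1 γ κ • (2 * b * a ^ 2 * b') +
      w2 γ κ • (a * d ^ 2 * c ^ 2 * b' + 2 * b * a * d * c ^ 2 * d') +
      w4 γ κ • (4 * d ^ 3 * c ^ 4 * d') := by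
    simp only [V, map_add, map_smul, map_mul, map_pow, map_ofNat, ha, hb, hc, hd, ha', hc']
  have hsplit : cycle8FormDeriv γ κ a b c d a' b' c' d' =
      (4 * w1 γ κ) • (a ^ 2 * b * b') + (2 * w2 γ κ) • (a * c ^ 2 * d ^ 2 * b') +
        (4 * w2 γ κ) • (a * b * c ^ 2 * d * d') + w3 γ κ • (c ^ 2 * d ^ 4 * a') +
        (2 * w3 γ κ) • (a * c * d ^ 4 * c') + (4 * w3 γ κ) • (a * c ^ 2 * d ^ 3 * d') +
        (8 * w4 γ κ) • (c ^ 4 * d ^ 3 * d') + (V - σ V) := by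
    rw [hσV]
    simp only [cycle8FormDeriv, V, Algebra.smul_def, map_mul, map_ofNat]
    ring
  rw [hsplit, map_add, map_sub, hΛ, sub_self, add_zero]

end Cycle8Form

local notation "𝔸" => AddMonoidAlgebra ℝ (ℤ × ℤ)

theorem AddMonoidAlgebra.finite_support_coeff_mk (g : 𝔸) (d : ℤ) :
    (Function.support fun b : ℤ => g.coeff (d, b)).Finite :=
  g.coeff.hasFiniteSupport.comp_of_injective (Prod.mk_right_injective d)

noncomputable def dvdCoeffSum (M : ℕ) : 𝔸 →ₗ[ℝ] ℝ where
  toFun g := ∑ᶠ (b : ℤ) (_ : (M : ℤ) ∣ b), g.coeff (0, b)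
  map_add' g h := by
    simp only [AddMonoidAlgebra.coeff_add, Finsupp.add_apply]
    exact finsum_mem_add_distrib' ((g.finite_support_coeff_mk 0).inter_of_right _)
      ((h.finite_support_coeff_mk 0).inter_of_right _)
  map_smul' r g := by
    simp only [AddMonoidAlgebra.coeff_smul_apply, smul_eq_mul, RingHom.id_apply]
    exact (mul_finsum_mem _ _).symm

theorem dvdCoeffSum_apply (M : ℕ) (g : 𝔸) :
    dvdCoeffSum M g = ∑ᶠ (b : ℤ) (_ : (M : ℤ) ∣ b), g.coeff (0, b) := rfl

noncomputable def invert : 𝔸 ≃ₐ[ℝ] 𝔸 := AddMonoidAlgebra.domCongr ℝ ℝ (AddEquiv.neg (ℤ × ℤ))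

theorem dvdCoeffSum_invert (M : ℕ) (g : 𝔸) : dvdCoeffSum M (invert g) = dvdCoeffSum M g := by
  simp only [dvdCoeffSum_apply, invert, AddMonoidAlgebra.coeff_domCongr, AddEquiv.neg_symm,
    AddEquiv.neg_apply, Prod.neg_mk, neg_zero]
  exact finsum_mem_eq_of_bijOn (fun b => -b)
    ⟨fun b hb => dvd_neg.mpr hb, neg_injective.injOn,
      fun b hb => ⟨-b, dvd_neg.mpr hb, neg_neg b⟩⟩ fun _ _ => rfl

section Fpa

variable {m M : ℕ}

theorem invert_fpa (p : Fin (m + 1) × Fin M → ℝ) (a : ℤ) : invert (fpa p a) = fpa p (-a) := by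
  simp only [fpa, map_sum, invert, AddMonoidAlgebra.domCongr_single, AddEquiv.neg_apply,
    Prod.neg_mk, neg_mul]

theorem fpa_add_smul (p v : Fin (m + 1) × Fin M → ℝ) (t : ℝ) (a : ℤ) :
    fpa (p + t • v) a = fpa p a + t • fpa v a := by
  simp only [fpa, Finset.smul_sum, ← Finset.sum_add_distrib, Pi.add_apply, Pi.smul_apply,
    smul_eq_mul, AddMonoidAlgebra.single_add, AddMonoidAlgebra.smul_single']

theorem fpa_sub (p v : Fin (m + 1) × Fin M → ℝ) (a : ℤ) : fpa (p - v) a = fpa p a - fpa v a := by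
  simp only [fpa, ← Finset.sum_sub_distrib, Pi.sub_apply, AddMonoidAlgebra.single_sub]

theorem fpa_single (i : Fin (m + 1)) (j : Fin M) (a : ℤ) :
    fpa (Pi.single (i, j) 1) a = AddMonoidAlgebra.single (a * i, a * j) 1 := by
  rw [fpa, Finset.sum_eq_single (i, j) (fun k _ hk => by simp [hk]) (by simp)]
  simp

end Fpa

section N8

variable {m M : ℕ} (γ κ : ℕ)

theorem N8_eq_dvdCoeffSum (q : Fin (m + 1) × Fin M → ℝ) :
    N8 m M γ κ q =
      dvdCoeffSum M (cycle8Form γ κ (fpa q 2) (fpa q (-2)) (fpa q 1) (fpa q (-1))) := by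
  simp only [N8, dvdCoeffSum_apply, cycle8Form, AddMonoidAlgebra.coeff_add, Finsupp.add_apply,
    AddMonoidAlgebra.coeff_smul_apply, smul_eq_mul]

noncomputable def N8Deriv (p v : Fin (m + 1) × Fin M → ℝ) : ℝ :=
  dvdCoeffSum M (cycle8FormDeriv γ κ (fpa p 2) (fpa p (-2)) (fpa p 1) (fpa p (-1))
    (fpa v 2) (fpa v (-2)) (fpa v 1) (fpa v (-1)))

theorem hasDerivAt_N8_line (p v : Fin (m + 1) × Fin M → ℝ) :
    HasDerivAt (fun t : ℝ => N8 m M γ κ (p + t • v)) (N8Deriv γ κ p v) 0 := by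
  simpa only [N8Deriv, N8_eq_dvdCoeffSum, fpa_add_smul] using
    hasDerivAt_cycle8Form_line γ κ (dvdCoeffSum M) (fpa p 2) (fpa p (-2)) (fpa p 1) (fpa p (-1))
      (fpa v 2) (fpa v (-2)) (fpa v 1) (fpa v (-1))

theorem N8Deriv_sub (p v w : Fin (m + 1) × Fin M → ℝ) :
    N8Deriv γ κ p (v - w) = N8Deriv γ κ p v - N8Deriv γ κ p w := by
  simp only [N8Deriv, fpa_sub, cycle8FormDeriv_sub, map_sub]

theorem N8Deriv_eq_zero_of_isLocalMinOn {pstar : Fin (m + 1) → ℝ} {p : Fin (m + 1) × Fin M → ℝ}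
    (hp : ∀ i, ∑ j, p (i, j) = pstar i)
    (hmin : IsLocalMinOn (N8 m M γ κ) {q | ∀ i, ∑ j, q (i, j) = pstar i} p)
    {v : Fin (m + 1) × Fin M → ℝ} (hv : ∀ i, ∑ j, v (i, j) = 0) : N8Deriv γ κ p v = 0 := by
  have hline (t : ℝ) : p + t • v ∈ {q | ∀ i, ∑ j, q (i, j) = pstar i} := fun i => by
    simp [Finset.sum_add_distrib, ← Finset.mul_sum, hp, hv]
  exact (hmin.isLocalMin_comp_line hline).hasDerivAt_eq_zero (hasDerivAt_N8_line γ κ p v)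

end N8

theorem stmt12_general {m M γ κ : ℕ} (hM : 2 ≤ M)
    (pstar : Fin (m + 1) → ℝ)
    (S : Set ((Fin (m + 1) × Fin M) → ℝ))
    (hS : S = {q | ∀ i : Fin (m + 1), ∑ j : Fin M, q (i, j) = pstar i})
    (p : Fin (m + 1) × Fin M → ℝ) (hpS : p ∈ S)
    (hmin : IsLocalMinOn (N8 m M γ κ) S p) :
    ∃ c : Fin (m + 1) → ℝ, ∀ (i : Fin (m + 1)) (j : Fin M),
      (∑ᶠ (b : ℤ) (_ : (M : ℤ) ∣ b),
        (4 * w1 γ κ * ((fpa p 2) ^ 2 * (fpa p (-2))).coeff (2 * (i : ℤ), b + 2 * (j : ℤ)) +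
         2 * w2 γ κ *
           ((fpa p 2) * (fpa p 1) ^ 2 * (fpa p (-1)) ^ 2).coeff (2 * (i : ℤ), b + 2 * (j : ℤ)) +
         4 * w2 γ κ *
           ((fpa p 2) * (fpa p (-2)) * (fpa p 1) ^ 2 * (fpa p (-1))).coeff ((i : ℤ), b + (j : ℤ)) +
         w3 γ κ * ((fpa p 1) ^ 2 * (fpa p (-1)) ^ 4).coeff (-(2 * (i : ℤ)), b - 2 * (j : ℤ)) +
         2 * w3 γ κ *
           ((fpa p 2) * (fpa p 1) * (fpa p (-1)) ^ 4).coeff (-(i : ℤ), b - (j : ℤ)) +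
         4 * w3 γ κ *
           ((fpa p 2) * (fpa p 1) ^ 2 * (fpa p (-1)) ^ 3).coeff ((i : ℤ), b + (j : ℤ)) +
         8 * w4 γ κ * ((fpa p 1) ^ 4 * (fpa p (-1)) ^ 3).coeff ((i : ℤ), b + (j : ℤ)))) = c i := by
  subst hS
  have : NeZero M := ⟨by omega⟩
  refine ⟨fun i => N8Deriv γ κ p (Pi.single (i, 0) 1), fun i j => ?_⟩
  calc _ = N8Deriv γ κ p (Pi.single (i, j) 1) := by
        rw [N8Deriv, map_cycle8FormDeriv_of_involution γ κ invert.toAlgHom (dvdCoeffSum M)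
          (dvdCoeffSum_invert M) (invert_fpa p 2) (by simpa using invert_fpa p (-2))
          (invert_fpa p 1) (by simpa using invert_fpa p (-1)) (invert_fpa _ 2) (invert_fpa _ 1)]
        simp only [fpa_single, dvdCoeffSum_apply]
        refine finsum_congr fun b => finsum_congr fun _ => ?_
        simp only [AddMonoidAlgebra.coeff_add, Finsupp.add_apply, AddMonoidAlgebra.coeff_smul_apply,
          smul_eq_mul, AddMonoidAlgebra.coeff_mul_single_apply, mul_one, Prod.neg_mk,
          Prod.mk_add_mk, zero_add, neg_mul, one_mul, neg_neg, ← sub_eq_add_neg, zero_sub]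
    _ = N8Deriv γ κ p (Pi.single (i, 0) 1) := by
        rw [← sub_eq_zero, ← N8Deriv_sub]
        refine N8Deriv_eq_zero_of_isLocalMinOn γ κ hpS hmin fun i' => ?_
        rcases eq_or_ne i' i with rfl | hi <;> simp [Finset.sum_sub_distrib, Pi.single_apply, *]

/-- Lemma 2: first-order necessary conditions at a local minimum of `N₈`
on the affine constraint set `S = {q | ∀ i, Σ_j q(i,j) = p*(i)}`. -/
theorem stmt12 {m M γ κ : ℕ} (hm : 1 ≤ m) (hM : 2 ≤ M) (hγ : 4 ≤ γ) (hκ : 4 ≤ κ)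
    (pstar : Fin (m + 1) → ℝ)
    (S : Set ((Fin (m + 1) × Fin M) → ℝ))
    (hS : S = {q | ∀ i : Fin (m + 1), ∑ j : Fin M, q (i, j) = pstar i})
    (p : Fin (m + 1) × Fin M → ℝ) (hpS : p ∈ S)
    (hmin : IsLocalMinOn (N8 m M γ κ) S p) :
    ∃ c : Fin (m + 1) → ℝ, ∀ (i : Fin (m + 1)) (j : Fin M),
      (∑ᶠ (b : ℤ) (_ : (M : ℤ) ∣ b),
        (4 * w1 γ κ * ((fpa p 2) ^ 2 * (fpa p (-2))).coeff (2 * (i : ℤ), b + 2 * (j : ℤ)) +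
         2 * w2 γ κ *
           ((fpa p 2) * (fpa p 1) ^ 2 * (fpa p (-1)) ^ 2).coeff (2 * (i : ℤ), b + 2 * (j : ℤ)) +
         4 * w2 γ κ *
           ((fpa p 2) * (fpa p (-2)) * (fpa p 1) ^ 2 * (fpa p (-1))).coeff ((i : ℤ), b + (j : ℤ)) +
         w3 γ κ * ((fpa p 1) ^ 2 * (fpa p (-1)) ^ 4).coeff (-(2 * (i : ℤ)), b - 2 * (j : ℤ)) +
         2 * w3 γ κ *
           ((fpa p 2) * (fpa p 1) * (fpa p (-1)) ^ 4).coeff (-(i : ℤ), b - (j : ℤ)) +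
         4 * w3 γ κ *
           ((fpa p 2) * (fpa p 1) ^ 2 * (fpa p (-1)) ^ 3).coeff ((i : ℤ), b + (j : ℤ)) +
         8 * w4 γ κ * ((fpa p 1) ^ 4 * (fpa p (-1)) ^ 3).coeff ((i : ℤ), b + (j : ℤ)))) = c i :=
  stmt12_general hM pstar S hS p hpS hmin
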